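/- For a prime p, the p-adic valuation estimate v_p((k!/n!)·S(n,k)·(ζ−1)^{n−k}) ≥ 0 holds for all 1 ≤ k ≤ n, where S(n,k) is the Stirling number of the second kind and ζ a primitive p-th root of unity in ℚ_p(ζ) (with v_p(ζ−1) = 1/(p−1)). -/

import Mathlib

/-!
Adelberg's estimate `(p - 1) v_p(k! S(n,k)) ≥ k - s_p(n)`, with `s_p` the base-`p` digit sum, is
proved by induction on `k`. Choosing the block of the label `k` in an ordered set partition gives
`k! S(n,k) = ∑_{m ≥ 1} C(n,m) (k-1)! S(n-m,k-1)`. By the ultrametric inequality some nonzero term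
has valuation at most that of the sum, and for it Kummer's theorem
`(p - 1) v_p(C(n,m)) = s_p(m) + s_p(n-m) - s_p(n)` and the induction hypothesis give the bound,
the extra unit coming from `s_p(m) ≥ 1`. Legendre's formula `(p - 1) v_p(n!) = n - s_p(n)` then turns the
estimate into the claim.
-/

/-- Stirling numbers of the second kind `S(n,k)`. -/
def stirlingS : ℕ → ℕ → ℕ
  | 0, 0 => 1
  | 0, _ + 1 => 0
  | _ + 1, 0 => 0
  | n + 1, k + 1 => stirlingS n k + (k + 1) * stirlingS n (k + 1)

open Nat Finset

theorem stirlingS_eq_stirlingSecond : stirlingS = stirlingSecond := by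
  funext n k
  induction n generalizing k with
  | zero => cases k <;> rfl
  | succ n ih =>
    cases k with
    | zero => rfl
    | succ k => rw [stirlingS, stirlingSecond_succ_succ, ih, ih, add_comm]

namespace Nat

theorem stirlingSecond_pos : ∀ {n k : ℕ}, 0 < k → k ≤ n → 0 < stirlingSecond n k
  | _, 0, hk, _ => absurd hk (lt_irrefl 0)
  | 0, _ + 1, _, hkn => absurd hkn (not_succ_le_zero _)
  | n + 1, 1, _, _ => by rw [stirlingSecond_one_right]; exact one_pos
  | n + 1, k + 2, _, hkn => by
    rw [stirlingSecond_succ_succ]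
    exact Nat.add_pos_right _ (stirlingSecond_pos k.succ_pos (by omega))

theorem succ_mul_stirlingSecond_succ (n k : ℕ) :
    (k + 1) * stirlingSecond n (k + 1) =
      ∑ i ∈ range n, n.choose (i + 1) * stirlingSecond (n - (i + 1)) k := by
  induction n generalizing k with
  | zero => simp
  | succ n ih =>
    have hfirst : ∑ i ∈ range (n + 1), n.choose i * stirlingSecond (n - i) k =
        (k + 1) * stirlingSecond n (k + 1) + stirlingSecond n k := by
      rw [sum_range_succ', ih k, choose_zero_right, one_mul, Nat.sub_zero]
    have hsecond : ∑ i ∈ range (n + 1), n.choose (i + 1) * stirlingSecond (n - i) k =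
        k * ((k + 1) * stirlingSecond n (k + 1)) + k * stirlingSecond n k := by
      rw [sum_range_succ, choose_succ_self, zero_mul, add_zero]
      have hpeel : ∀ i ∈ range n, n - i = n - (i + 1) + 1 := fun i hi => by
        have := mem_range.mp hi; omega
      rcases k.eq_zero_or_pos with rfl | hk
      · rw [zero_mul, zero_mul, add_zero]
        refine sum_eq_zero fun i hi => ?_
        rw [hpeel i hi, stirlingSecond_succ_zero, mul_zero]
      · have hk' : k - 1 + 1 = k := Nat.sub_add_cancel hk
        have hsplit : ∀ i ∈ range n, n.choose (i + 1) * stirlingSecond (n - i) k =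
            k * (n.choose (i + 1) * stirlingSecond (n - (i + 1)) k) +
              n.choose (i + 1) * stirlingSecond (n - (i + 1)) (k - 1) := fun i hi => by
          rw [hpeel i hi, stirlingSecond_succ_left _ _ hk.ne', mul_add, mul_left_comm]
        rw [sum_congr rfl hsplit, sum_add_distrib, ← mul_sum, ← ih k, ← ih (k - 1), hk']
    have hpascal : ∀ i ∈ range (n + 1),
        (n + 1).choose (i + 1) * stirlingSecond (n + 1 - (i + 1)) k =
          n.choose i * stirlingSecond (n - i) k +
            n.choose (i + 1) * stirlingSecond (n - i) k := fun i _ => by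
      rw [Nat.add_sub_add_right, choose_succ_succ', add_mul]
    rw [sum_congr rfl hpascal, sum_add_distrib, hfirst, hsecond, stirlingSecond_succ_succ]
    ring

theorem digits_sum_pos (b : ℕ) {n : ℕ} (hn : n ≠ 0) : 0 < (b.digits n).sum :=
  List.sum_pos_iff_exists_pos_nat.mpr
    ⟨_, List.getLast_mem (digits_ne_nil_iff_ne_zero.mpr hn),
      Nat.pos_of_ne_zero (getLast_digit_ne_zero b hn)⟩

end Nat

section Padic

variable {p : ℕ} [Fact p.Prime]

theorem exists_padicValNat_le_padicValNat_sum {ι : Type*} {s : Finset ι} {f : ι → ℕ}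
    (hs : ∑ i ∈ s, f i ≠ 0) :
    ∃ i ∈ s, f i ≠ 0 ∧ padicValNat p (f i) ≤ padicValNat p (∑ i ∈ s, f i) := by
  by_contra! H
  refine pow_succ_padicValNat_not_dvd (p := p) hs (dvd_sum fun i hi => ?_)
  rcases eq_or_ne (f i) 0 with hi0 | hi0
  · simp [hi0]
  · exact (pow_dvd_pow p (H i hi hi0)).trans pow_padicValNat_dvd

theorem le_digits_sum_add_sub_one_mul_padicValNat_factorial_mul_stirlingSecond {n k : ℕ}
    (hk : 0 < k) (hS : stirlingSecond n k ≠ 0) :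
    k ≤ (p.digits n).sum + (p - 1) * padicValNat p (k ! * stirlingSecond n k) := by
  induction k generalizing n with
  | zero => exact absurd hk (lt_irrefl 0)
  | succ k ih =>
    rcases k.eq_zero_or_pos with rfl | hk
    · have hn : n ≠ 0 := by rintro rfl; exact hS rfl
      have := digits_sum_pos p hn
      omega
    have hsum : (k + 1)! * stirlingSecond n (k + 1) =
        ∑ i ∈ range n, n.choose (i + 1) * (k ! * stirlingSecond (n - (i + 1)) k) := by
      rw [factorial_succ, mul_comm (k + 1), mul_assoc, succ_mul_stirlingSecond_succ, mul_sum]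
      exact sum_congr rfl fun i _ => mul_left_comm _ _ _
    have hne : (k + 1)! * stirlingSecond n (k + 1) ≠ 0 := mul_ne_zero (factorial_ne_zero _) hS
    obtain ⟨i, -, hterm, hle⟩ := exists_padicValNat_le_padicValNat_sum (p := p) (hsum ▸ hne)
    rw [← hsum] at hle
    obtain ⟨hC, hF⟩ := mul_ne_zero_iff.mp hterm
    have hin : i + 1 ≤ n := choose_ne_zero_iff.mp hC
    have hrest := ih hk (right_ne_zero_of_mul hF)
    have hkummer : (p.digits (i + 1)).sum + (p.digits (n - (i + 1))).sum ≤
        (p - 1) * padicValNat p (n.choose (i + 1)) + (p.digits n).sum := by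
      rw [sub_one_mul_padicValNat_choose_eq_sub_sum_digits hin]; omega
    have hdigit := digits_sum_pos p (Nat.add_one_ne_zero i)
    have hmono := Nat.mul_le_mul_left (p - 1) hle
    rw [padicValNat.mul hC hF, Nat.mul_add] at hmono
    omega

end Padic

/-- For a prime `p`, the `p`-adic valuation estimate
`v_p((k!/n!)·S(n,k)·(ζ−1)^{n−k}) ≥ 0` for `1 ≤ k ≤ n`, where `ζ` is a primitive
`p`-th root of unity (so `v_p(ζ−1) = 1/(p−1)`); i.e.
`v_p(k!) + v_p(S(n,k)) + (n−k)/(p−1) ≥ v_p(n!)`. -/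
theorem stmt7 (p : ℕ) (hp : p.Prime) (n k : ℕ) (hk : 1 ≤ k) (hkn : k ≤ n) :
    (padicValNat p n.factorial : ℚ) ≤
      (padicValNat p k.factorial : ℚ) + (padicValNat p (stirlingS n k) : ℚ) +
        ((n : ℚ) - (k : ℚ)) / ((p : ℚ) - 1) := by
  have := Fact.mk hp
  rw [stirlingS_eq_stirlingSecond]
  have hS := (stirlingSecond_pos hk hkn).ne'
  have hadelberg := le_digits_sum_add_sub_one_mul_padicValNat_factorial_mul_stirlingSecond
    (p := p) hk hS
  rw [padicValNat.mul (factorial_ne_zero k) hS] at hadelberg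
  have hlegendre := sub_one_mul_padicValNat_factorial (p := p) n
  have hnat : (p - 1) * padicValNat p n ! + k ≤
      (p - 1) * (padicValNat p k ! + padicValNat p (stirlingSecond n k)) + n := by
    have := digit_sum_le p n
    omega
  have hp1 : (0 : ℚ) < p - 1 := sub_pos.mpr (by exact_mod_cast hp.one_lt)
  rw [← sub_le_iff_le_add', le_div_iff₀ hp1]
  have hq : ((p - 1 : ℕ) : ℚ) * padicValNat p n ! + k ≤
      ((p - 1 : ℕ) : ℚ) * (padicValNat p k ! + padicValNat p (stirlingSecond n k)) + n := by
    exact_mod_cast hnat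
  rw [Nat.cast_sub hp.one_le, Nat.cast_one] at hq
  linarith
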